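/- arXiv:2602.14636 — 2 statements merged into one kernel-verified Lean document; each statement's English description precedes it below -/
import Mathlib

section
/- Let A be a set and →₁, →₂ be binary relations on A such that (i) →₁ ⊆ →₂, (ii) →₂ is terminating (well-founded in the reverse direction, i.e., there is no infinite →₂-sequence), and (iii) →₂ ⊆ (→₁ ∘ →₂* ∘ ↔₁* ∘ ←₂*), where →* denotes reflexive-transitive closure, ↔* denotes the equivalence (reflexive-symmetric-transitive) closure, and ← denotes the inverse relation. Then ↔₁* = ↔₂*. -/
open Relation

lemma wf_of_no_chain {A : Type*} (r2 : A → A → Prop)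
    (hterm : ¬ ∃ f : ℕ → A, ∀ n, r2 (f n) (f (n + 1))) :
    WellFounded (fun x y => r2 y x) := by
  classical
  by_contra h
  set s : A → A → Prop := fun x y => r2 y x with hs
  have ⟨a, ha⟩ : ∃ a, ¬ Acc s a := by
    by_contra h'
    push_neg at h'
    exact h ⟨h'⟩
  have step : ∀ x : A, ¬ Acc s x → ∃ y, r2 x y ∧ ¬ Acc s y := by
    intro x hx
    by_contra h'
    push_neg at h'
    exact hx (Acc.intro x fun y hy => h' y hy)
  let g : {x : A // ¬ Acc s x} → {x : A // ¬ Acc s x} := fun x =>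
    ⟨(step x.1 x.2).choose, (step x.1 x.2).choose_spec.2⟩
  have hg : ∀ x : {x : A // ¬ Acc s x}, r2 x.1 (g x).1 := fun x =>
    (step x.1 x.2).choose_spec.1
  exact hterm ⟨fun n => (g^[n] ⟨a, ha⟩).1, fun n => by
    show r2 (g^[n] ⟨a, ha⟩).1 (g^[n+1] ⟨a, ha⟩).1
    rw [Function.iterate_succ_apply']; exact hg _⟩

/-- Rewriting induction principle: if →₁ ⊆ →₂, →₂ is terminating, and
    →₂ ⊆ (→₁ ∘ →₂* ∘ ↔₁* ∘ ←₂*), then ↔₁* = ↔₂*. -/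
theorem stmt0 {A : Type*} (r1 r2 : A → A → Prop)
    (hsub : ∀ a b, r1 a b → r2 a b)
    (hterm : ¬ ∃ f : ℕ → A, ∀ n, r2 (f n) (f (n + 1)))
    (hmain : ∀ a b, r2 a b →
      Relation.Comp
        (Relation.Comp (Relation.Comp r1 (Relation.ReflTransGen r2)) (Relation.EqvGen r1))
        (fun x y => Relation.ReflTransGen r2 y x) a b) :
    ∀ a b, Relation.EqvGen r1 a b ↔ Relation.EqvGen r2 a b := by
  have wf : WellFounded (TransGen fun x y => r2 y x) :=
    (wf_of_no_chain r2 hterm).transGen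
  have key : ∀ a b, r2 a b → EqvGen r1 a b := by
    intro a
    induction a using wf.induction with
    | _ a IH =>
      intro b hab
      have IH' : ∀ x, TransGen r2 a x → ∀ y, r2 x y → EqvGen r1 x y := by
        intro x hx y hy
        exact IH x (Relation.transGen_swap.mpr hx) y hy
      have conv : ∀ x y, TransGen r2 a x → ReflTransGen r2 x y → EqvGen r1 x y := by
        intro x y hax hxy
        induction hxy with
        | refl => exact EqvGen.refl _
        | tail h1 h2 ih =>
          rename_i u v
          exact (ih).trans _ _ _ (IH' u (TransGen.trans_left hax h1) v h2)
      obtain ⟨e, ⟨d, ⟨c, h1, h2⟩, h3⟩, h4⟩ := hmain a b hab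
      have hac : EqvGen r1 a c := EqvGen.rel _ _ h1
      have hcd : EqvGen r1 c d := conv c d (TransGen.single (hsub a c h1)) h2
      have hbe : EqvGen r1 b e := conv b e (TransGen.single hab) h4
      exact ((hac.trans _ _ _ hcd).trans _ _ _ h3).trans _ _ _ (hbe.symm _ _)
  intro a b
  constructor
  · intro h
    induction h with
    | rel x y h => exact EqvGen.rel _ _ (hsub _ _ h)
    | refl x => exact EqvGen.refl _
    | symm x y _ ih => exact ih.symm _ _
    | trans x y z _ _ ih1 ih2 => exact ih1.trans _ _ _ ih2
  · intro h
    induction h with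
    | rel x y h => exact key _ _ h
    | refl x => exact EqvGen.refl _
    | symm x y _ ih => exact ih.symm _ _
    | trans x y z _ _ ih1 ih2 => exact ih1.trans _ _ _ ih2
end

section
/- Let A be a set and →₁, →₂ binary relations on A such that →₁ ⊆ →₂, →₂ is terminating, and →₂ ⊆ (→₁ ∘ →₂* ∘ ↔₁* ∘ ←₂*). Then every pair related by a single →₂ step is related by ↔₁*, i.e., →₂ ⊆ ↔₁*. -/
/-- Key induction step of the rewriting induction principle: under the same
    hypotheses, every single →₂ step is contained in ↔₁*. -/
theorem stmt1 {A : Type*} (r1 r2 : A → A → Prop)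
    (hsub : ∀ a b, r1 a b → r2 a b)
    (hterm : ¬ ∃ f : ℕ → A, ∀ n, r2 (f n) (f (n + 1)))
    (hmain : ∀ a b, r2 a b →
      Relation.Comp
        (Relation.Comp (Relation.Comp r1 (Relation.ReflTransGen r2)) (Relation.EqvGen r1))
        (fun x y => Relation.ReflTransGen r2 y x) a b) :
    ∀ a b, r2 a b → Relation.EqvGen r1 a b := by
  have hwf : WellFounded (fun x y => r2 y x) := by
    by_contra h
    have hex : ∃ a, ¬ Acc (fun x y => r2 y x) a := by
      by_contra h'
      push_neg at h'
      exact h ⟨h'⟩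
    obtain ⟨a, ha⟩ := hex
    have step : ∀ x : {x : A // ¬ Acc (fun x y => r2 y x) x},
        ∃ y : {x : A // ¬ Acc (fun x y => r2 y x) x}, r2 x.1 y.1 := by
      rintro ⟨x, hx⟩
      by_contra hy
      push_neg at hy
      apply hx
      constructor
      intro y hyx
      by_contra hacc
      exact hy ⟨y, hacc⟩ hyx
    choose g hg using step
    refine hterm ⟨fun n => (g^[n] ⟨a, ha⟩).1, fun n => ?_⟩
    simp only [Function.iterate_succ', Function.comp_apply]
    exact hg _
  have hwft : WellFounded (Relation.TransGen (fun x y => r2 y x)) := hwf.transGen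
  intro a
  induction a using hwft.induction with
  | _ a IH =>
    intro b hab
    obtain ⟨e, ⟨d, ⟨c, hac, hcd⟩, hde⟩, hbe⟩ := hmain a b hab
    have chain : ∀ x y, Relation.ReflTransGen r2 x y →
        Relation.TransGen (fun u v => r2 v u) x a → Relation.EqvGen r1 x y := by
      intro x y hxy
      induction hxy using Relation.ReflTransGen.head_induction_on with
      | refl => intro _; exact Relation.EqvGen.refl _
      | head h h' ih =>
        intro hx
        have e1 := IH _ hx _ h
        exact Relation.EqvGen.trans _ _ _ e1 (ih (Relation.TransGen.head h hx))
    have hac2 : Relation.TransGen (fun u v => r2 v u) c a :=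
      Relation.TransGen.single (hsub a c hac)
    have hb2 : Relation.TransGen (fun u v => r2 v u) b a :=
      Relation.TransGen.single hab
    exact Relation.EqvGen.trans _ _ _ (Relation.EqvGen.rel _ _ hac)
      (Relation.EqvGen.trans _ _ _ (chain c d hcd hac2)
        (Relation.EqvGen.trans _ _ _ hde
          (Relation.EqvGen.symm _ _ (chain b e hbe hb2))))
end
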